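/- arXiv:2310.08965 — 10 statements merged into one kernel-verified Lean document; each statement's English description precedes it below -/
import Mathlib

section
/- Let M be a type, f : M → M, w : M → ℂ. Suppose x ∈ M is a periodic point of f of order n, that w(f^[k](x)) ≠ 0 for every 0 ≤ k ≤ n−1, and that λ ∈ ℂ satisfies λ^n = ∏_{k=0}^{n−1} w(f^[k](x)). Then λ ≠ 0 and λ is an eigenvalue of the weighted pushforward operator T_{w,f} on M →₀ ℂ: the element γ = Σ_{i=0}^{n−1} a_i·δ_{f^[i](x)}, where a_0 = 1 and a_{i+1} = λ^{−1}·w(f^[i](x))·a_i for 0 ≤ i ≤ n−2, is nonzero and satisfies T_{w,f}(γ) = λ·γ. -/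
noncomputable def weightedPushforward {M : Type*} (w : M → ℂ) (f : M → M) :
    (M →₀ ℂ) →ₗ[ℂ] (M →₀ ℂ) :=
  Finsupp.lsum ℂ (fun x => w x • Finsupp.lsingle (f x))

open Finset

/- The orbit `x, f x, …, f^[n-1] x` is a cycle, so `γ = Σ aᵢ δ_{f^[i] x}` is an eigenvector of
`T_{w,f}` with eigenvalue `λ` exactly when `T` shifts each coefficient along the cycle scaled by
`λ`: `w(f^[i] x) aᵢ = λ aᵢ₊₁`, and `w(f^[n-1] x) aₙ₋₁ = λ a₀` on closing the cycle. The recursion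
gives `aᵢ = λ⁻ⁱ ∏_{k<i} w(f^[k] x)`, and the closing condition is then `λⁿ = ∏_{k<n} w(f^[k] x)`.
Minimality of the period makes `x` appear only once in the orbit, so `γ(x) = a₀ = 1`. -/

theorem eq_pow_mul_prod_of_succ_eq {R : Type*} [CommMonoid R] {a b : ℕ → R} {c : R} {m : ℕ}
    (hrec : ∀ i < m, a (i + 1) = c * b i * a i) :
    ∀ i ≤ m, a i = c ^ i * (∏ k ∈ range i, b k) * a 0 := by
  intro i
  induction i with
  | zero => simp
  | succ j ih =>
    intro hj
    rw [hrec j hj, ih (by omega), prod_range_succ, pow_succ]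
    ac_rfl

section Orbit

variable {M : Type*} (f : M → M) (x : M)

theorem sum_single_iterate_apply_self {n : ℕ} (hn : 1 ≤ n)
    (hmin : ∀ k, 1 ≤ k → k < n → f^[k] x ≠ x) (a : ℕ → ℂ) :
    (∑ i ∈ range n, Finsupp.single (f^[i] x) (a i)) x = a 0 := by
  rw [Finsupp.finsetSum_apply, sum_eq_single_of_mem 0 (mem_range.2 hn)]
  · simp
  · intro i hi hi0
    exact Finsupp.single_eq_of_ne (hmin i (by omega) (mem_range.1 hi)).symm

variable (w : M → ℂ)

theorem weightedPushforward_single (y : M) (c : ℂ) :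
    weightedPushforward w f (Finsupp.single y c) = Finsupp.single (f y) (w y * c) := by
  simp [weightedPushforward, Finsupp.smul_single]

theorem weightedPushforward_sum_orbit {m : ℕ} (hper : f^[m + 1] x = x) (lam : ℂ) (a : ℕ → ℂ)
    (hstep : ∀ i < m, w (f^[i] x) * a i = lam * a (i + 1))
    (hclose : w (f^[m] x) * a m = lam * a 0) :
    weightedPushforward w f (∑ i ∈ range (m + 1), Finsupp.single (f^[i] x) (a i)) =
      lam • ∑ i ∈ range (m + 1), Finsupp.single (f^[i] x) (a i) := by
  simp only [map_sum, weightedPushforward_single, smul_sum, Finsupp.smul_single, smul_eq_mul]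
  rw [sum_range_succ, sum_range_succ', ← hclose, Function.iterate_zero_apply,
    ← Function.iterate_succ_apply' f m, hper]
  congr 1
  refine sum_congr rfl fun i hi => ?_
  rw [← Function.iterate_succ_apply' f i, hstep i (mem_range.1 hi)]

end Orbit

/-- If `x` is a periodic point of `f` of order `n`, the weights `w(f^[k](x))` are nonzero for
`0 ≤ k ≤ n-1`, and `λ^n = ∏_{k<n} w(f^[k](x))`, then `λ ≠ 0` and the explicitly given
`γ = Σ_{i<n} a_i δ_{f^[i](x)}` (with `a_0 = 1`, `a_{i+1} = λ⁻¹ w(f^[i](x)) a_i`) is a nonzero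
eigenvector of `T_{w,f}` for the eigenvalue `λ`. -/
theorem stmt0 {M : Type*} (f : M → M) (w : M → ℂ) (x : M) (n : ℕ)
    (hn : 1 ≤ n) (hper : f^[n] x = x) (hmin : ∀ k, 1 ≤ k → k < n → f^[k] x ≠ x)
    (hw : ∀ k, k ≤ n - 1 → w (f^[k] x) ≠ 0)
    (lam : ℂ) (hlam : lam ^ n = ∏ k ∈ Finset.range n, w (f^[k] x))
    (a : ℕ → ℂ) (ha0 : a 0 = 1)
    (harec : ∀ i, i ≤ n - 2 → a (i + 1) = lam⁻¹ * w (f^[i] x) * a i) :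
    lam ≠ 0 ∧
      (∑ i ∈ Finset.range n, Finsupp.single (f^[i] x) (a i)) ≠ 0 ∧
      weightedPushforward w f (∑ i ∈ Finset.range n, Finsupp.single (f^[i] x) (a i)) =
        lam • (∑ i ∈ Finset.range n, Finsupp.single (f^[i] x) (a i)) := by
  obtain ⟨m, rfl⟩ : ∃ m, n = m + 1 := ⟨n - 1, by omega⟩
  have hlam0 : lam ≠ 0 := by
    rintro rfl
    refine prod_ne_zero_iff.2 (fun k hk => hw k ?_) (by simpa using hlam.symm)
    have := mem_range.1 hk
    omega
  have hrec : ∀ i < m, a (i + 1) = lam⁻¹ * w (f^[i] x) * a i := fun i hi => harec i (by omega)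
  have hclose : w (f^[m] x) * a m = lam * a 0 := by
    rw [eq_pow_mul_prod_of_succ_eq hrec m le_rfl, ha0]
    calc w (f^[m] x) * (lam⁻¹ ^ m * (∏ k ∈ range m, w (f^[k] x)) * 1)
        = lam⁻¹ ^ m * lam ^ (m + 1) := by rw [hlam, prod_range_succ]; ring
      _ = lam * 1 := by rw [pow_succ, ← mul_assoc, ← mul_pow, inv_mul_cancel₀ hlam0]; ring
  refine ⟨hlam0, fun h => ?_, weightedPushforward_sum_orbit f x w hper lam a
    (fun i hi => by rw [hrec i hi]; field_simp) hclose⟩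
  have hx := sum_single_iterate_apply_self f x hn hmin a
  rw [h, ha0, Finsupp.zero_apply] at hx
  exact zero_ne_one hx
end

section
/- Let M be a type, f : M → M, w : M → ℂ, and let γ ∈ (M →₀ ℂ) be nonzero with support of cardinality n. If T_{w,f}(γ) = λ·γ for some λ ∈ ℂ with λ ≠ 0, then every x in the support of γ is a periodic point of f, its order m_x satisfies 1 ≤ m_x ≤ n, and λ^{m_x} = ∏_{j=0}^{m_x−1} w(f^[j](x)). -/
open Function Set

section Periodic

variable {α : Type*} {f : α → α} {s : Set α} {x : α}

theorem Set.InjOn.mem_periodicPts (hs : s.Finite) (hmaps : MapsTo f s s) (hinj : InjOn f s)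
    (hx : x ∈ s) : x ∈ periodicPts f := by
  have := hs.to_subtype
  obtain ⟨n, hn, hper⟩ := ((hmaps.restrict_inj).mpr hinj).mem_periodicPts ⟨x, hx⟩
  exact mk_mem_periodicPts hn (hper.map (g := Subtype.val) fun _ => rfl)

theorem minimalPeriod_le_card_of_mapsTo {t : Finset α} (hmaps : MapsTo f t t) (hx : x ∈ t) :
    minimalPeriod f x ≤ t.card := by
  simpa using Finset.card_le_card_of_injOn (s := Finset.range (minimalPeriod f x)) (f^[·] x)
    (fun k _ => hmaps.iterate k hx) (by simpa using iterate_injOn_Iio_minimalPeriod)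

end Periodic

section Eigenvector

variable {M : Type*} {w : M → ℂ} {f : M → M} {γ : M →₀ ℂ} {lam : ℂ}

theorem weightedPushforward_apply [DecidableEq M] (y : M) :
    weightedPushforward w f γ y = ∑ z ∈ γ.support with f z = y, w z * γ z := by
  simp +contextual [weightedPushforward, Finsupp.sum, Finsupp.single_apply, Finset.sum_filter]

variable (hlam : lam ≠ 0) (heig : weightedPushforward w f γ = lam • γ)
include hlam heig

theorem support_subset_image_of_eigen [DecidableEq M] : γ.support ⊆ γ.support.image f := by
  intro y hy
  have hTy : weightedPushforward w f γ y ≠ 0 := by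
    rw [heig, Finsupp.smul_apply, smul_eq_mul]
    exact mul_ne_zero hlam (Finsupp.mem_support_iff.mp hy)
  rw [weightedPushforward_apply] at hTy
  obtain ⟨z, hz, -⟩ := Finset.exists_ne_zero_of_sum_ne_zero hTy
  rw [Finset.mem_filter] at hz
  exact Finset.mem_image.mpr ⟨z, hz⟩

theorem image_support_eq_of_eigen [DecidableEq M] : γ.support.image f = γ.support :=
  (Finset.eq_of_subset_of_card_le (support_subset_image_of_eigen hlam heig)
    Finset.card_image_le).symm

theorem mapsTo_support_of_eigen : MapsTo f γ.support γ.support := by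
  classical
  intro z hz
  rw [← image_support_eq_of_eigen hlam heig]
  exact Finset.mem_image_of_mem f hz

theorem injOn_support_of_eigen : InjOn f γ.support := by
  classical
  exact Finset.injOn_of_card_image_eq (by rw [image_support_eq_of_eigen hlam heig])

theorem mul_apply_eq_of_eigen {z : M} (hz : z ∈ γ.support) : lam * γ (f z) = w z * γ z := by
  classical
  have hfiber : {a ∈ γ.support | f a = f z} = {z} := by
    ext a
    simp only [Finset.mem_filter, Finset.mem_singleton]
    exact ⟨fun ⟨ha, h⟩ => injOn_support_of_eigen hlam heig ha hz h,
      by rintro rfl; exact ⟨hz, rfl⟩⟩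
  rw [← smul_eq_mul, ← Finsupp.smul_apply, ← heig, weightedPushforward_apply, hfiber,
    Finset.sum_singleton]

theorem pow_mul_apply_iterate_of_eigen {x : M} (hx : x ∈ γ.support) (k : ℕ) :
    lam ^ k * γ (f^[k] x) = (∏ j ∈ Finset.range k, w (f^[j] x)) * γ x := by
  induction k with
  | zero => simp
  | succ k ih =>
    have hk := (mapsTo_support_of_eigen hlam heig).iterate k hx
    calc lam ^ (k + 1) * γ (f^[k + 1] x) = lam ^ k * (lam * γ (f (f^[k] x))) := by
          rw [iterate_succ_apply']; ring
      _ = w (f^[k] x) * (lam ^ k * γ (f^[k] x)) := by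
          rw [mul_apply_eq_of_eigen hlam heig hk]; ring
      _ = (∏ j ∈ Finset.range (k + 1), w (f^[j] x)) * γ x := by
          rw [ih, Finset.prod_range_succ]; ring

theorem pow_eq_prod_of_isPeriodicPt {x : M} (hx : x ∈ γ.support) {m : ℕ}
    (hper : IsPeriodicPt f m x) : lam ^ m = ∏ j ∈ Finset.range m, w (f^[j] x) := by
  have h := pow_mul_apply_iterate_of_eigen hlam heig hx m
  rw [hper.eq] at h
  exact mul_right_cancel₀ (Finsupp.mem_support_iff.mp hx) h

end Eigenvector

theorem stmt2_general {M : Type*} (f : M → M) (w : M → ℂ) (γ : M →₀ ℂ) (n : ℕ)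
    (hcard : γ.support.card = n)
    (lam : ℂ) (hlam : lam ≠ 0)
    (heig : weightedPushforward w f γ = lam • γ) :
    ∀ x ∈ γ.support, ∃ m : ℕ, 1 ≤ m ∧ m ≤ n ∧
      f^[m] x = x ∧ (∀ k, 1 ≤ k → k < m → f^[k] x ≠ x) ∧
      lam ^ m = ∏ j ∈ Finset.range m, w (f^[j] x) := by
  intro x hx
  have hperiodic : x ∈ periodicPts f :=
    (injOn_support_of_eigen hlam heig).mem_periodicPts γ.support.finite_toSet
      (mapsTo_support_of_eigen hlam heig) hx
  refine ⟨minimalPeriod f x, minimalPeriod_pos_of_mem_periodicPts hperiodic,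
    hcard ▸ minimalPeriod_le_card_of_mapsTo (mapsTo_support_of_eigen hlam heig) hx,
    iterate_minimalPeriod,
    fun k hk hkm => not_isPeriodicPt_of_pos_of_lt_minimalPeriod (by omega) hkm,
    pow_eq_prod_of_isPeriodicPt hlam heig hx (isPeriodicPt_minimalPeriod f x)⟩

/-- If `γ ≠ 0` has support of cardinality `n` and `T_{w,f}(γ) = λ • γ` with `λ ≠ 0`, then every
`x` in the support of `γ` is a periodic point of `f` whose order `m` satisfies `1 ≤ m ≤ n`,
and `λ^m = ∏_{j<m} w(f^[j](x))`. -/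
theorem stmt2 {M : Type*} (f : M → M) (w : M → ℂ) (γ : M →₀ ℂ) (n : ℕ)
    (hγ : γ ≠ 0) (hcard : γ.support.card = n)
    (lam : ℂ) (hlam : lam ≠ 0)
    (heig : weightedPushforward w f γ = lam • γ) :
    ∀ x ∈ γ.support, ∃ m : ℕ, 1 ≤ m ∧ m ≤ n ∧
      f^[m] x = x ∧ (∀ k, 1 ≤ k → k < m → f^[k] x ≠ x) ∧
      lam ^ m = ∏ j ∈ Finset.range m, w (f^[j] x) :=
  stmt2_general f w γ n hcard lam hlam heig
end

section
/- Let M be a type, f : M → M, and let γ ∈ (M →₀ ℂ) be nonzero with support of cardinality n. If Finsupp.mapDomain f γ = λ·γ for some λ ∈ ℂ, then either λ = 0 or λ^n = 1. -/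
/-- If `γ ≠ 0` has support of cardinality `n` and `Finsupp.mapDomain f γ = λ • γ`, then
`λ = 0` or `λ^n = 1`. -/
theorem stmt4 {M : Type*} (f : M → M) (γ : M →₀ ℂ) (n : ℕ)
    (hγ : γ ≠ 0) (hcard : γ.support.card = n)
    (lam : ℂ) (heig : Finsupp.mapDomain f γ = lam • γ) :
    lam = 0 ∨ lam ^ n = 1 := by
  classical
  by_cases hlam : lam = 0
  · exact Or.inl hlam
  right
  set s := γ.support with hs
  have hsupp : (lam • γ).support = s := Finsupp.support_smul_eq hlam
  have hsub : s ⊆ s.image f := by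
    have h := Finsupp.mapDomain_support (f := f) (s := γ)
    rw [heig, hsupp] at h
    exact h
  have hcardle : (s.image f).card ≤ s.card := Finset.card_image_le
  have himg : s.image f = s :=
    (Finset.eq_of_subset_of_card_le hsub hcardle).symm
  have hinj : Set.InjOn f s := by
    rw [← Finset.card_image_iff, himg]
  have hval : ∀ x ∈ s, γ x = lam * γ (f x) := by
    intro x hx
    have := Finsupp.mapDomain_apply' (↑s) γ (by simp [hs]) hinj (a := x) (by exact_mod_cast hx)
    rw [heig] at this
    simpa using this.symm
  have hprod : ∏ x ∈ s, γ x = lam ^ n * ∏ x ∈ s, γ (f x) := by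
    rw [Finset.prod_congr rfl hval, Finset.prod_mul_distrib, Finset.prod_const, hcard]
  have hperm : ∏ x ∈ s, γ (f x) = ∏ x ∈ s, γ x := by
    rw [← Finset.prod_image (fun x hx y hy h => hinj hx hy h), himg]
  have hne : (∏ x ∈ s, γ x) ≠ 0 :=
    Finset.prod_ne_zero_iff.2 fun x hx => Finsupp.mem_support_iff.1 hx
  rw [hperm] at hprod
  have := mul_right_cancel₀ hne (by rw [← hprod, one_mul] : (1 : ℂ) * ∏ x ∈ s, γ x = lam ^ n * ∏ x ∈ s, γ x)
  exact this.symm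
end

section
/- Let (M,d) be a complete metric space and let f : M → M be such that the image f(M) is totally bounded and f is (r,ε)-flat for some r > 0 and some ε ∈ (0,1). Then the set ⋂_{n ≥ 1} closure(f^[n](M)) is finite. -/
open Set Metric Filter

/-- If `M` is a complete metric space, `f : M → M` has totally bounded image and is
`(r,ε)`-flat for some `r > 0` and `ε ∈ (0,1)`, then `⋂_{n ≥ 1} closure(f^[n](M))` is finite. -/
theorem stmt6 {M : Type*} [MetricSpace M] [CompleteSpace M] (f : M → M) (r ε : ℝ)
    (hr : 0 < r) (hε0 : 0 < ε) (hε1 : ε < 1)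
    (htb : TotallyBounded (Set.range f))
    (hflat : ∀ x y : M, x ≠ y → dist x y ≤ r → dist (f x) (f y) ≤ ε * dist x y) :
    (⋂ (n : ℕ) (_ : 1 ≤ n), closure (Set.range f^[n])).Finite := by
  classical
  set A : Set M := ⋂ (n : ℕ) (_ : 1 ≤ n), closure (Set.range f^[n]) with hAdef
  have hAmem : ∀ x : M, x ∈ A ↔ ∀ n : ℕ, 1 ≤ n → x ∈ closure (Set.range f^[n]) := by
    intro x; rw [hAdef]; exact Set.mem_iInter₂
  have hcont : Continuous f := by
    rw [Metric.continuous_iff]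
    intro b δ hδ
    refine ⟨min r δ, lt_min hr hδ, fun a ha => ?_⟩
    rcases eq_or_ne a b with rfl | hab
    · simpa using hδ
    · have h1 : dist a b ≤ r := le_of_lt (lt_of_lt_of_le ha (min_le_left _ _))
      have h2 := hflat a b hab h1
      have h3 : dist a b < δ := lt_of_lt_of_le ha (min_le_right _ _)
      nlinarith [dist_nonneg (x := a) (y := b)]
  have hmono : ∀ m n : ℕ, m ≤ n → Set.range f^[n] ⊆ Set.range f^[m] := by
    intro m n hmn
    obtain ⟨k, rfl⟩ := Nat.exists_eq_add_of_le hmn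
    rw [Function.iterate_add]
    exact Set.range_comp_subset_range _ _
  have hAsub : A ⊆ closure (Set.range f) := by
    intro x hx
    have := (hAmem x).1 hx 1 le_rfl
    simpa using this
  have hK : IsCompact (closure (Set.range f)) :=
    TotallyBounded.isCompact_of_isClosed htb.closure isClosed_closure
  -- A ⊆ f '' A
  have hsurj : ∀ a ∈ A, ∃ b ∈ A, f b = a := by
    intro a ha
    have hv : ∀ n : ℕ, ∃ v, v ∈ Set.range f^[n+1] ∧ dist a (f v) < 1/(n+1) := by
      intro n
      have ha2 : a ∈ closure (Set.range f^[n+2]) := (hAmem a).1 ha (n+2) (by omega)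
      rw [Metric.mem_closure_iff] at ha2
      obtain ⟨b, hb, hd⟩ := ha2 (1/(n+1)) (by positivity)
      obtain ⟨z, rfl⟩ := hb
      refine ⟨f^[n+1] z, Set.mem_range_self _, ?_⟩
      rw [← Function.iterate_succ_apply' f (n+1) z]
      exact hd
    choose v hv1 hv2 using hv
    have hvK : ∀ n, v n ∈ closure (Set.range f) := by
      intro n
      apply subset_closure
      have := hmono 1 (n+1) (by omega) (hv1 n)
      simpa using this
    obtain ⟨u, huK, φ, hφ, hconv⟩ := hK.tendsto_subseq hvK
    have huA : u ∈ A := by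
      rw [hAmem]
      intro m hm
      refine mem_closure_of_tendsto hconv ?_
      filter_upwards [Filter.eventually_ge_atTop m] with k hk
      exact hmono m (φ k + 1) (le_trans hk (le_trans hφ.le_apply (Nat.le_succ _))) (hv1 (φ k))
    refine ⟨u, huA, ?_⟩
    have h1 : Filter.Tendsto (fun k => f (v (φ k))) atTop (nhds (f u)) :=
      (hcont.tendsto u).comp hconv
    have h2 : Filter.Tendsto (fun k => f (v (φ k))) atTop (nhds a) := by
      rw [tendsto_iff_dist_tendsto_zero]
      refine squeeze_zero (fun k => dist_nonneg) (fun k => ?_)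
        tendsto_one_div_add_atTop_nhds_zero_nat
      have hk1 := hv2 (φ k)
      have hk2 : (1:ℝ)/(φ k + 1) ≤ 1/(k+1) := by
        apply one_div_le_one_div_of_le (by positivity)
        have hk3 : k ≤ φ k := hφ.le_apply
        push_cast
        exact_mod_cast by omega
      calc dist (f (v (φ k))) a = dist a (f (v (φ k))) := dist_comm _ _
        _ ≤ 1/(k+1) := le_of_lt (lt_of_lt_of_le hk1 hk2)
    exact tendsto_nhds_unique h1 h2
  -- choose a right inverse g on A
  have hg' : ∀ a : M, ∃ b : M, a ∈ A → b ∈ A ∧ f b = a := by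
    intro a
    by_cases ha : a ∈ A
    · obtain ⟨b, hb, hfb⟩ := hsurj a ha
      exact ⟨b, fun _ => ⟨hb, hfb⟩⟩
    · exact ⟨a, fun h => absurd h ha⟩
  choose g hg using hg'
  have hstep : ∀ a ∈ A, ∀ b ∈ A, a ≠ b → min r (dist a b / ε) ≤ dist (g a) (g b) := by
    intro a ha b hb hab
    have hga := hg a ha
    have hgb := hg b hb
    have hne : g a ≠ g b := fun h => hab (by rw [← hga.2, ← hgb.2, h])
    rcases le_or_gt (dist (g a) (g b)) r with h | h
    · have h2 := hflat (g a) (g b) hne h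
      rw [hga.2, hgb.2] at h2
      refine le_trans (min_le_right _ _) ?_
      rw [div_le_iff₀ hε0]
      linarith [mul_comm ε (dist (g a) (g b))]
    · exact le_trans (min_le_left _ _) h.le
  have hgA : ∀ n : ℕ, ∀ a ∈ A, g^[n] a ∈ A := by
    intro n
    induction n with
    | zero => simpa using fun a ha => ha
    | succ n ih =>
      intro a ha
      rw [Function.iterate_succ_apply']
      exact (hg _ (ih a ha)).1
  have hiter : ∀ n : ℕ, ∀ a ∈ A, ∀ b ∈ A, a ≠ b →
      min r (dist a b / ε ^ n) ≤ dist (g^[n] a) (g^[n] b) := by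
    intro n
    induction n with
    | zero =>
      intro a ha b hb hab
      simpa using min_le_right r (dist a b)
    | succ n ih =>
      intro a ha b hb hab
      have hA1 := hgA n a ha
      have hA2 := hgA n b hb
      have hdpos : 0 < dist a b := dist_pos.2 hab
      have h2 := ih a ha b hb hab
      have hmin : 0 < min r (dist a b / ε ^ n) := lt_min hr (by positivity)
      have hne : g^[n] a ≠ g^[n] b := by
        intro h
        rw [h, dist_self] at h2
        linarith
      have h1 := hstep _ hA1 _ hA2 hne
      rw [Function.iterate_succ_apply', Function.iterate_succ_apply']
      refine le_trans (le_min (min_le_left _ _) ?_) h1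
      -- min r (dist a b / ε ^ (n+1)) ≤ dist (g^[n] a) (g^[n] b) / ε
      have h3 : min r (dist a b / ε ^ n) / ε ≤ dist (g^[n] a) (g^[n] b) / ε := by gcongr
      refine le_trans ?_ h3
      rcases min_cases r (dist a b / ε ^ n) with ⟨he, hle⟩ | ⟨he, hle⟩
      · rw [he]
        refine le_trans (min_le_left _ _) ?_
        rw [le_div_iff₀ hε0]
        nlinarith
      · rw [he]
        refine le_trans (min_le_right _ _) ?_
        rw [pow_succ, ← div_div]
  -- final pigeonhole
  obtain ⟨t, htfin, htcov⟩ := (Metric.totallyBounded_iff.1 htb.closure) (r/2) (by positivity)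
  by_contra hinf
  have hinf : A.Infinite := hinf
  obtain ⟨S, hSA, hScard⟩ := hinf.exists_subset_card_eq (htfin.toFinset.card + 2)
  have hSne : S.offDiag.Nonempty := by
    obtain ⟨a, ha, b, hb, hne⟩ := Finset.one_lt_card.1 (by omega : 1 < S.card)
    exact ⟨(a, b), Finset.mem_offDiag.2 ⟨ha, hb, hne⟩⟩
  set δ := S.offDiag.inf' hSne (fun p => dist p.1 p.2) with hδdef
  have hδpos : 0 < δ := by
    apply (Finset.lt_inf'_iff hSne).2
    rintro ⟨a, b⟩ hab
    rw [Finset.mem_offDiag] at hab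
    exact dist_pos.2 hab.2.2
  have hδle : ∀ a ∈ S, ∀ b ∈ S, a ≠ b → δ ≤ dist a b := by
    intro a ha b hb hne
    exact Finset.inf'_le (fun p => dist p.1 p.2)
      (show (a, b) ∈ S.offDiag from Finset.mem_offDiag.2 ⟨ha, hb, hne⟩)
  obtain ⟨n, hn⟩ := exists_pow_lt_of_lt_one (div_pos hδpos hr) hε1
  have hrδ : r ≤ δ / ε ^ n := by
    rw [le_div_iff₀ (pow_pos hε0 n)]
    rw [lt_div_iff₀ hr] at hn
    nlinarith
  have hsep : ∀ a ∈ S, ∀ b ∈ S, a ≠ b → r ≤ dist (g^[n] a) (g^[n] b) := by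
    intro a ha b hb hne
    have h1 := hiter n a (hSA ha) b (hSA hb) hne
    have h2 : r ≤ dist a b / ε ^ n :=
      le_trans hrδ (by gcongr; exact hδle a ha b hb hne)
    rw [min_eq_left h2] at h1
    exact h1
  have hcen : ∀ x : M, ∃ c, x ∈ A → c ∈ htfin.toFinset ∧ dist x c < r/2 := by
    intro x
    by_cases hx : x ∈ A
    · have hx' : x ∈ ⋃ y ∈ t, Metric.ball y (r/2) := htcov (hAsub hx)
      rw [Set.mem_iUnion₂] at hx'
      obtain ⟨c, hc, hxc⟩ := hx'
      exact ⟨c, fun _ => ⟨htfin.mem_toFinset.2 hc, hxc⟩⟩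
    · exact ⟨x, fun h => absurd h hx⟩
  choose cen hcen using hcen
  have hinj : Set.InjOn (fun a => g^[n] a) ↑S := by
    intro a ha b hb hab
    by_contra hne
    have h1 := hsep a ha b hb hne
    simp only at hab
    rw [hab, dist_self] at h1
    linarith
  set S' := S.image (fun a => g^[n] a) with hS'def
  have hS'card : S'.card = htfin.toFinset.card + 2 := by
    rw [hS'def, Finset.card_image_of_injOn hinj, hScard]
  have hS'A : ∀ x ∈ S', x ∈ A := by
    intro x hx
    obtain ⟨a, ha, rfl⟩ := Finset.mem_image.1 hx
    exact hgA n a (hSA ha)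
  have hmaps : ∀ x ∈ S', cen x ∈ htfin.toFinset := fun x hx => (hcen x (hS'A x hx)).1
  obtain ⟨x, hx, y, hy, hxy, hcxy⟩ :=
    Finset.exists_ne_map_eq_of_card_lt_of_maps_to (by omega) hmaps
  have hd1 := (hcen x (hS'A x hx)).2
  have hd2 := (hcen y (hS'A y hy)).2
  have hlt : dist x y < r := by
    calc dist x y ≤ dist x (cen x) + dist (cen x) y := dist_triangle _ _ _
      _ = dist x (cen x) + dist y (cen y) := by rw [hcxy, dist_comm (cen y) y]
      _ < r/2 + r/2 := by gcongr
      _ = r := by ring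
  obtain ⟨a, ha, rfl⟩ := Finset.mem_image.1 hx
  obtain ⟨b, hb, rfl⟩ := Finset.mem_image.1 hy
  have hab : a ≠ b := fun h => hxy (by rw [h])
  exact absurd (hsep a ha b hb hab) (not_le.2 hlt)
end

section
/- Let (M,d) be a metric space and let f : M → M satisfy: (i) f is uniformly locally flat; (ii) for every ε > 0 there exists R > 0 such that d(x,y) > R implies d(f(x),f(y)) ≤ ε·d(x,y); (iii) f is Lipschitz with constant α for some α < 1. Then for every ε ∈ (0,1) there exists C > 0 such that for all n ∈ ℕ and all x, y ∈ M, d(f^[n](x), f^[n](y)) ≤ C·ε^n·d(x,y). (Consequently the Lipschitz constants satisfy Lip(f^[n])^{1/n} → 0 as n → ∞, i.e. the spectral radius of the induced Lipschitz operator f̂ is 0 and its spectrum is {0}.) -/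
/-- Let `f : M → M` be uniformly locally flat, flat at large distances (for every `ε > 0` there
is `R > 0` such that `d(x,y) > R` implies `d(f x, f y) ≤ ε d(x,y)`), and Lipschitz with
constant `α < 1`. Then for every `ε ∈ (0,1)` there is `C > 0` such that for all `n`, `x`, `y`:
`d(f^[n] x, f^[n] y) ≤ C ε^n d(x,y)`. -/
theorem stmt8 {M : Type*} [MetricSpace M] (f : M → M)
    (hulf : ∀ ε > (0 : ℝ), ∃ δ > (0 : ℝ), ∀ x y : M,
      dist x y ≤ δ → dist (f x) (f y) ≤ ε * dist x y)
    (hfar : ∀ ε > (0 : ℝ), ∃ R > (0 : ℝ), ∀ x y : M,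
      R < dist x y → dist (f x) (f y) ≤ ε * dist x y)
    (α : NNReal) (hα : (α : ℝ) < 1) (hlip : LipschitzWith α f) :
    ∀ ε : ℝ, 0 < ε → ε < 1 → ∃ C > (0 : ℝ), ∀ (n : ℕ) (x y : M),
      dist (f^[n] x) (f^[n] y) ≤ C * ε ^ n * dist x y := by
  intro ε hε0 hε1
  obtain ⟨δ, hδ0, hδ⟩ := hulf ε hε0
  obtain ⟨R, hR0, hR⟩ := hfar ε hε0
  have hα0 : (0 : ℝ) ≤ α := α.2
  obtain ⟨N, hN⟩ := exists_pow_lt_of_lt_one (div_pos hδ0 hR0) hα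
  have hαN : (α : ℝ) ^ N * R ≤ δ := by
    have := (lt_div_iff₀ hR0).mp hN
    linarith
  have hαle1 : ∀ m : ℕ, (α : ℝ) ^ m ≤ 1 := fun m =>
    pow_le_one₀ hα0 hα.le
  have hiter : ∀ (m : ℕ) (x y : M),
      dist (f^[m] x) (f^[m] y) ≤ (α : ℝ) ^ m * dist x y := by
    intro m x y
    have := (hlip.iterate m).dist_le_mul x y
    simpa [NNReal.coe_pow] using this
  -- if two points are within δ, iterates contract by ε each step and stay within δ
  have hsmall : ∀ x y : M, dist x y ≤ δ → ∀ n : ℕ,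
      dist (f^[n] x) (f^[n] y) ≤ ε ^ n * dist x y ∧ dist (f^[n] x) (f^[n] y) ≤ δ := by
    intro x y hxy n
    induction n with
    | zero => simpa using hxy
    | succ n ih =>
      obtain ⟨h1, h2⟩ := ih
      rw [Function.iterate_succ_apply', Function.iterate_succ_apply']
      have hstep : dist (f (f^[n] x)) (f (f^[n] y)) ≤ ε * dist (f^[n] x) (f^[n] y) :=
        hδ _ _ h2
      constructor
      · calc dist (f (f^[n] x)) (f (f^[n] y)) ≤ ε * dist (f^[n] x) (f^[n] y) := hstep
          _ ≤ ε * (ε ^ n * dist x y) := by nlinarith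
          _ = ε ^ (n + 1) * dist x y := by ring
      · calc dist (f (f^[n] x)) (f (f^[n] y)) ≤ ε * dist (f^[n] x) (f^[n] y) := hstep
          _ ≤ 1 * δ := mul_le_mul hε1.le h2 dist_nonneg zero_le_one
          _ = δ := one_mul δ
  -- if two points are within R, then d(f^[n] x, f^[n] y) ≤ ε^(n-N) * d(x,y)
  have hA : ∀ x y : M, dist x y ≤ R → ∀ n : ℕ,
      dist (f^[n] x) (f^[n] y) ≤ ε ^ (n - N) * dist x y := by
    intro x y hxy n
    have hdN : dist (f^[N] x) (f^[N] y) ≤ δ := by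
      calc dist (f^[N] x) (f^[N] y) ≤ (α : ℝ) ^ N * dist x y := hiter N x y
        _ ≤ (α : ℝ) ^ N * R := by nlinarith [pow_nonneg hα0 N]
        _ ≤ δ := hαN
    by_cases hn : N ≤ n
    · have h1 := (hsmall (f^[N] x) (f^[N] y) hdN (n - N)).1
      rw [← Function.iterate_add_apply, ← Function.iterate_add_apply,
        Nat.sub_add_cancel hn] at h1
      have hcontr : dist (f^[N] x) (f^[N] y) ≤ dist x y := by
        calc dist (f^[N] x) (f^[N] y) ≤ (α : ℝ) ^ N * dist x y := hiter N x y
          _ ≤ 1 * dist x y := by nlinarith [hαle1 N, dist_nonneg (x := x) (y := y)]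
          _ = dist x y := one_mul _
      calc dist (f^[n] x) (f^[n] y) ≤ ε ^ (n - N) * dist (f^[N] x) (f^[N] y) := h1
        _ ≤ ε ^ (n - N) * dist x y := by nlinarith [pow_nonneg hε0.le (n - N)]
    · have hz : n - N = 0 := Nat.sub_eq_zero_of_le (le_of_not_ge hn)
      rw [hz, pow_zero, one_mul]
      calc dist (f^[n] x) (f^[n] y) ≤ (α : ℝ) ^ n * dist x y := hiter n x y
        _ ≤ 1 * dist x y := by nlinarith [hαle1 n, dist_nonneg (x := x) (y := y)]
        _ = dist x y := one_mul _
  -- main estimate for all pairs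
  have hmain : ∀ (n : ℕ) (x y : M),
      dist (f^[n] x) (f^[n] y) ≤ ε ^ (n - N) * dist x y := by
    intro n
    induction n with
    | zero => intro x y; simp
    | succ n ih =>
      intro x y
      by_cases hxy : dist x y ≤ R
      · exact hA x y hxy (n + 1)
      · push_neg at hxy
        have h1 : dist (f x) (f y) ≤ ε * dist x y := hR x y hxy
        have h2 := ih (f x) (f y)
        rw [Function.iterate_succ_apply, Function.iterate_succ_apply]
        have hpow : ε ^ (n - N + 1) ≤ ε ^ (n + 1 - N) :=
          pow_le_pow_of_le_one hε0.le hε1.le (by omega)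
        calc dist (f^[n] (f x)) (f^[n] (f y)) ≤ ε ^ (n - N) * dist (f x) (f y) := h2
          _ ≤ ε ^ (n - N) * (ε * dist x y) := by
              nlinarith [pow_nonneg hε0.le (n - N)]
          _ = ε ^ (n - N + 1) * dist x y := by ring
          _ ≤ ε ^ (n + 1 - N) * dist x y := by
              nlinarith [dist_nonneg (x := x) (y := y)]
  refine ⟨ε⁻¹ ^ N, pow_pos (inv_pos.mpr hε0) N, fun n x y => ?_⟩
  have hkey : ε ^ (n - N) ≤ ε⁻¹ ^ N * ε ^ n := by
    have h1 : ε ^ (n - N) * ε ^ N ≤ ε ^ n := by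
      rw [← pow_add]
      exact pow_le_pow_of_le_one hε0.le hε1.le (by omega)
    have h2 : (0 : ℝ) < ε ^ N := pow_pos hε0 N
    rw [inv_pow, inv_mul_eq_div, le_div_iff₀ h2]
    linarith
  calc dist (f^[n] x) (f^[n] y) ≤ ε ^ (n - N) * dist x y := hmain n x y
    _ ≤ (ε⁻¹ ^ N * ε ^ n) * dist x y := by
        nlinarith [dist_nonneg (x := x) (y := y)]
end

section
/- Let φ : ℕ → Option ℕ and let w : ℕ → ℂ be bounded. Then 0 is an eigenvalue of T_{w,φ} (i.e. T_{w,φ} is not injective on ℓ¹) if and only if φ is not injective, or there exists i ∈ ℕ with φ(i) = none, or there exists i ∈ ℕ with w(i) = 0. -/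
/-!
Every coordinate of `T a` is a sum over a fibre of `φ`. If `φ` is injective and total, each
`i` is the only point of the fibre over `φ i`, so `(T a)(φ i) = w i * a i`, and with `w` nowhere
zero `T a = 0` forces `a = 0`. Conversely `T e_i = 0` when `φ i = none` or `w i = 0`, and if
`φ i₁ = φ i₂ = some j` with `i₁ ≠ i₂`, then `T` sends both `e_{i₁}` and `e_{i₂}` to
multiples of `e_j`, so `w i₂ • e_{i₁} - w i₁ • e_{i₂}` lies in the kernel.
-/

open scoped ENNReal

variable {ι 𝕜 : Type*} [NormedField 𝕜] {p : ℝ≥0∞}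

theorem lp.single_ne_zero [DecidableEq ι] (i : ι) {c : 𝕜} (hc : c ≠ 0) :
    lp.single p i c ≠ (0 : lp (fun _ : ι => 𝕜) p) := fun h =>
  hc (by simpa [lp.single_apply_self] using congrArg (fun a : lp (fun _ : ι => 𝕜) p => a i) h)

def IsWeightedCompositionOperator (φ : ι → Option ι) (w : ι → 𝕜)
    (T : lp (fun _ : ι => 𝕜) p → lp (fun _ : ι => 𝕜) p) : Prop :=
  ∀ a j, T a j = ∑' i : {i // φ i = some j}, w i * a i

namespace IsWeightedCompositionOperator

variable {φ : ι → Option ι} {w : ι → 𝕜}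
  {T : lp (fun _ : ι => 𝕜) p → lp (fun _ : ι => 𝕜) p}

theorem apply_eq_of_fiber_eq_singleton (hT : IsWeightedCompositionOperator φ w T)
    (a : lp (fun _ : ι => 𝕜) p) {i j : ι} (hij : φ i = some j)
    (huniq : ∀ k, φ k = some j → k = i) : T a j = w i * a i := by
  rw [hT, tsum_eq_single ⟨i, hij⟩]
  rintro ⟨k, hk⟩ hki
  exact absurd (Subtype.ext (huniq k hk)) hki

theorem eq_zero_of_apply_eq_zero (hT : IsWeightedCompositionOperator φ w T)
    (hφ : Function.Injective φ) (htot : ∀ i, φ i ≠ none) (hw : ∀ i, w i ≠ 0)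
    {a : lp (fun _ : ι => 𝕜) p} (ha : T a = 0) : a = 0 := by
  ext i
  obtain ⟨j, hij⟩ := Option.ne_none_iff_exists'.mp (htot i)
  have hTa : T a j = w i * a i :=
    hT.apply_eq_of_fiber_eq_singleton a hij fun k hk => hφ (hk.trans hij.symm)
  rw [ha] at hTa
  exact (mul_eq_zero.mp hTa.symm).resolve_left (hw i)

section Single

variable [DecidableEq ι]

theorem tsum_fiber_mul_single (j i : ι) (c : 𝕜) :
    ∑' k : {k // φ k = some j}, w k * (lp.single p i c : lp (fun _ : ι => 𝕜) p) k =
      if φ i = some j then w i * c else 0 := by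
  simp only [lp.coeFn_single, Pi.single_apply, mul_ite, mul_zero]
  split_ifs with hij
  · rw [tsum_eq_single ⟨i, hij⟩]
    · simp
    · rintro ⟨k, hk⟩ hki
      exact if_neg fun h => hki (Subtype.ext h)
  · have hne : ∀ k : {k // φ k = some j}, (k : ι) ≠ i := fun k h => hij (h ▸ k.2)
    simp only [hne, if_false, tsum_zero]

theorem apply_single_of_eq_none (hT : IsWeightedCompositionOperator φ w T) {i : ι}
    (hi : φ i = none) (c : 𝕜) : T (lp.single p i c) = 0 := by
  ext j
  rw [hT, tsum_fiber_mul_single, hi, if_neg (Option.some_ne_none j).symm]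
  rfl

theorem apply_single_of_eq_some (hT : IsWeightedCompositionOperator φ w T) {i j : ι}
    (hij : φ i = some j) (c : 𝕜) : T (lp.single p i c) = lp.single p j (w i * c) := by
  ext k
  rw [hT, tsum_fiber_mul_single]
  simp only [hij, Option.some_inj, lp.coeFn_single, Pi.single_apply, eq_comm]

theorem apply_single_of_weight_eq_zero (hT : IsWeightedCompositionOperator φ w T) {i : ι}
    (hi : w i = 0) (c : 𝕜) : T (lp.single p i c) = 0 := by
  cases hφi : φ i with
  | none => exact hT.apply_single_of_eq_none hφi c
  | some j => rw [hT.apply_single_of_eq_some hφi, hi, zero_mul, lp.single_zero]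

theorem exists_ne_zero_apply_eq_zero
    {T : lp (fun _ : ι => 𝕜) p →ₗ[𝕜] lp (fun _ : ι => 𝕜) p}
    (hT : IsWeightedCompositionOperator φ w T)
    (h : ¬ Function.Injective φ ∨ (∃ i, φ i = none) ∨ (∃ i, w i = 0)) :
    ∃ a : lp (fun _ : ι => 𝕜) p, a ≠ 0 ∧ T a = 0 := by
  rcases h with hφ | ⟨i, hi⟩ | ⟨i, hi⟩
  · obtain ⟨i₁, i₂, heq, hne⟩ := Function.not_injective_iff.mp hφ
    by_cases hw₂ : w i₂ = 0
    · exact ⟨_, lp.single_ne_zero i₂ one_ne_zero, hT.apply_single_of_weight_eq_zero hw₂ 1⟩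
    cases hj : φ i₁ with
    | none => exact ⟨_, lp.single_ne_zero i₁ one_ne_zero, hT.apply_single_of_eq_none hj 1⟩
    | some j =>
      refine ⟨lp.single p i₁ (w i₂) - lp.single p i₂ (w i₁), fun h => hw₂ ?_, ?_⟩
      · simpa [Pi.single_apply, hne] using
          congrArg (fun a : lp (fun _ : ι => 𝕜) p => a i₁) h
      · rw [map_sub, hT.apply_single_of_eq_some hj, hT.apply_single_of_eq_some (heq ▸ hj),
          mul_comm, sub_self]
  · exact ⟨_, lp.single_ne_zero i one_ne_zero, hT.apply_single_of_eq_none hi 1⟩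
  · exact ⟨_, lp.single_ne_zero i one_ne_zero, hT.apply_single_of_weight_eq_zero hi 1⟩

end Single

end IsWeightedCompositionOperator

theorem stmt11_general (φ : ℕ → Option ℕ) (w : ℕ → ℂ)
    (T : lp (fun _ : ℕ => ℂ) 1 →L[ℂ] lp (fun _ : ℕ => ℂ) 1)
    (hT : ∀ (a : lp (fun _ : ℕ => ℂ) 1) (j : ℕ),
      T a j = ∑' i : {i : ℕ // φ i = some j}, w i * a i) :
    (∃ a : lp (fun _ : ℕ => ℂ) 1, a ≠ 0 ∧ T a = 0) ↔
      (¬ Function.Injective φ ∨ (∃ i : ℕ, φ i = none) ∨ (∃ i : ℕ, w i = 0)) := by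
  have hT' : IsWeightedCompositionOperator φ w T := hT
  refine ⟨fun ⟨a, ha, hTa⟩ => ?_, hT'.exists_ne_zero_apply_eq_zero (T := T.toLinearMap)⟩
  by_contra! ⟨hφ, htot, hw⟩
  exact ha (hT'.eq_zero_of_apply_eq_zero hφ htot hw hTa)

/-- Let `T` be the weighted shift-type operator on `ℓ¹` determined by `φ : ℕ → Option ℕ` and a
bounded weight `w` (i.e. `(T a)(j) = Σ_{i : φ(i) = some j} w(i)·a(i)`). Then `0` is an
eigenvalue of `T` (i.e. `T` is not injective) iff `φ` is not injective, or `φ(i) = none` for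
some `i`, or `w(i) = 0` for some `i`. -/
theorem stmt11 (φ : ℕ → Option ℕ) (w : ℕ → ℂ) (hw : ∃ C : ℝ, ∀ i, ‖w i‖ ≤ C)
    (T : lp (fun _ : ℕ => ℂ) 1 →L[ℂ] lp (fun _ : ℕ => ℂ) 1)
    (hT : ∀ (a : lp (fun _ : ℕ => ℂ) 1) (j : ℕ),
      T a j = ∑' i : {i : ℕ // φ i = some j}, w i * a i) :
    (∃ a : lp (fun _ : ℕ => ℂ) 1, a ≠ 0 ∧ T a = 0) ↔
      (¬ Function.Injective φ ∨ (∃ i : ℕ, φ i = none) ∨ (∃ i : ℕ, w i = 0)) :=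
  stmt11_general φ w T hT
end

section
/- Let φ : ℕ → Option ℕ and let w : ℕ → ℂ be bounded. Then T_{w,φ} : ℓ¹ → ℓ¹ is surjective if and only if both of the following hold: (a) for every j ∈ ℕ there exists i ∈ ℕ with φ(i) = some j; and (b) there exists c > 0 such that for every j ∈ ℕ there exists i ∈ ℕ with φ(i) = some j and |w(i)| > c. -/
/-!
If `T` is onto, the open mapping theorem gives every `e_j` a preimage `a` with `‖a‖ ≤ C`;
as `|(T a)(j)|` is at most `‖a‖` times the largest weight on the fibre `φ⁻¹(some j)`, some weight
on that fibre exceeds `1 / (2C)`. Conversely, if `σ j` is an index in the fibre of `j` with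
`|w (σ j)| > c`, then placing `b j / w (σ j)` at `σ j` (and `0` elsewhere) gives an `ℓ¹` preimage
of `b` of norm at most `‖b‖ / c`.
-/

open Function
open scoped ENNReal

variable {ι κ 𝕜 : Type*}

section
variable {E : ι → Type*} [∀ i, NormedAddCommGroup (E i)]

theorem lp.summable_norm_of_one (a : lp E 1) : Summable fun i => ‖a i‖ := by
  simpa using (lp.memℓp a).summable (p := 1) (by norm_num)

theorem lp.norm_eq_tsum_norm_of_one (a : lp E 1) : ‖a‖ = ∑' i, ‖a i‖ := by
  simpa using lp.norm_rpow_eq_tsum (p := 1) (by norm_num) a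

end

theorem injective_of_apply_eq_some {φ : ι → Option κ} {σ : κ → ι} (hσ : ∀ j, φ (σ j) = some j) :
    Injective σ :=
  Injective.of_comp (f := φ) (by simpa [comp_def, hσ] using Option.some_injective κ)

section NormedField
variable [NormedField 𝕜]

theorem norm_tsum_subtype_mul_le {s : Set ι} {w : ι → 𝕜} {c : ℝ} (hw : ∀ i ∈ s, ‖w i‖ ≤ c)
    (hc : 0 ≤ c) (a : lp (fun _ : ι => 𝕜) 1) : ‖∑' i : s, w i * a i‖ ≤ c * ‖a‖ := by
  have hle : ∀ i : s, ‖w i * a i‖ ≤ c * ‖a i‖ := fun i => by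
    rw [norm_mul]; exact mul_le_mul_of_nonneg_right (hw i i.2) (norm_nonneg _)
  have hsum : Summable fun i : s => c * ‖a i‖ :=
    ((lp.summable_norm_of_one a).subtype s).mul_left c
  calc ‖∑' i : s, w i * a i‖
      ≤ ∑' i : s, ‖w i * a i‖ :=
        norm_tsum_le_tsum_norm (hsum.of_nonneg_of_le (fun _ => norm_nonneg _) hle)
    _ ≤ ∑' i : s, c * ‖a i‖ :=
        (hsum.of_nonneg_of_le (fun _ => norm_nonneg _) hle).tsum_le_tsum hle hsum
    _ = c * ∑' i : s, ‖a i‖ := tsum_mul_left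
    _ ≤ c * ∑' i, ‖a i‖ := by
        gcongr
        exact (lp.summable_norm_of_one a).tsum_subtype_le _ s (fun _ => norm_nonneg _)
    _ = c * ‖a‖ := by rw [lp.norm_eq_tsum_norm_of_one]

theorem Memℓp.extend_zero {E : Type*} [NormedAddCommGroup E] {p : ℝ≥0∞} (hp : 0 < p.toReal)
    {σ : κ → ι} (hσ : Injective σ) {g : κ → E} (hg : Memℓp g p) : Memℓp (extend σ g 0) p := by
  have hnorm : (fun i => ‖extend σ g 0 i‖ ^ p.toReal) = extend σ (fun j => ‖g j‖ ^ p.toReal) 0 :=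
    funext fun i => by
      rw [apply_extend (‖·‖ ^ p.toReal)]; congr 1; ext; simp [Real.zero_rpow hp.ne']
  rw [memℓp_gen_iff hp, hnorm, summable_extend_zero hσ]
  exact hg.summable hp

theorem tsum_fiber_mul_extend {φ : ι → Option κ} {σ : κ → ι} (hσ : ∀ j, φ (σ j) = some j)
    (w : ι → 𝕜) (g : κ → 𝕜) (j : κ) :
    ∑' i : {i // φ i = some j}, w i * extend σ g (0 : ι → 𝕜) i = w (σ j) * g j := by
  rw [tsum_eq_single ⟨σ j, hσ j⟩, (injective_of_apply_eq_some hσ).extend_apply]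
  rintro ⟨i, hi⟩ hne
  have hi_range : ∀ k, σ k ≠ i := by
    rintro k rfl
    obtain rfl : k = j := Option.some_injective _ (by rw [← hσ k, hi])
    exact hne rfl
  rw [extend_apply' g (0 : ι → 𝕜) i (not_exists.2 hi_range), Pi.zero_apply, mul_zero]

theorem surjective_of_weight_gt {φ : ι → Option κ} {w : ι → 𝕜}
    {T : lp (fun _ : ι => 𝕜) 1 →L[𝕜] lp (fun _ : κ => 𝕜) 1}
    (hT : ∀ a j, T a j = ∑' i : {i // φ i = some j}, w i * a i) {c : ℝ} (hc : 0 < c)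
    (hcw : ∀ j, ∃ i, φ i = some j ∧ c < ‖w i‖) : Surjective T := by
  choose σ hσ hσw using hcw
  have hw0 : ∀ j, w (σ j) ≠ 0 := fun j => norm_pos_iff.1 (hc.trans (hσw j))
  intro b
  set g : κ → 𝕜 := fun j => b j / w (σ j)
  have hg : Memℓp g 1 := ((lp.memℓp b).norm.const_mul c⁻¹).mono fun j => by
    rw [norm_div, ← div_eq_inv_mul]
    exact div_le_div_of_nonneg_left (norm_nonneg _) hc (hσw j).le
  refine ⟨⟨extend σ g 0, hg.extend_zero (by norm_num) (injective_of_apply_eq_some hσ)⟩,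
    lp.ext (funext fun j => ?_)⟩
  rw [hT]
  exact (tsum_fiber_mul_extend hσ w g j).trans (mul_div_cancel₀ _ (hw0 j))

end NormedField

section OpenMapping
variable [NontriviallyNormedField 𝕜] [CompleteSpace 𝕜] {φ : ι → Option κ} {w : ι → 𝕜}
  {T : lp (fun _ : ι => 𝕜) 1 →L[𝕜] lp (fun _ : κ => 𝕜) 1}

theorem exists_weight_gt_of_surjective
    (hT : ∀ a j, T a j = ∑' i : {i // φ i = some j}, w i * a i) (hsurj : Surjective T) :
    ∃ c > (0 : ℝ), ∀ j, ∃ i, φ i = some j ∧ c < ‖w i‖ := by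
  classical
  obtain ⟨C, hC0, hC⟩ := T.exists_preimage_norm_le hsurj
  refine ⟨(2 * C)⁻¹, by positivity, fun j => ?_⟩
  by_contra! hsmall
  obtain ⟨a, ha, hna⟩ := hC (lp.single 1 j 1)
  have ha_le : ‖a‖ ≤ C := by simpa [lp.norm_single] using hna
  have hTa : ‖T a j‖ ≤ (2 * C)⁻¹ * ‖a‖ := by
    rw [hT]
    exact norm_tsum_subtype_mul_le (s := {i | φ i = some j}) hsmall (by positivity) a
  rw [ha, lp.single_apply_self, norm_one] at hTa
  have : (1 : ℝ) ≤ 2⁻¹ :=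
    calc (1 : ℝ) ≤ (2 * C)⁻¹ * ‖a‖ := hTa
      _ ≤ (2 * C)⁻¹ * C := by gcongr
      _ = 2⁻¹ := by field_simp
  norm_num at this

end OpenMapping

theorem stmt12_general (φ : ℕ → Option ℕ) (w : ℕ → ℂ)
    (T : lp (fun _ : ℕ => ℂ) 1 →L[ℂ] lp (fun _ : ℕ => ℂ) 1)
    (hT : ∀ (a : lp (fun _ : ℕ => ℂ) 1) (j : ℕ),
      T a j = ∑' i : {i : ℕ // φ i = some j}, w i * a i) :
    Function.Surjective T ↔
      ((∀ j : ℕ, ∃ i : ℕ, φ i = some j) ∧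
        ∃ c > (0 : ℝ), ∀ j : ℕ, ∃ i : ℕ, φ i = some j ∧ c < ‖w i‖) := by
  refine ⟨fun hsurj => ?_, fun ⟨_, c, hc, hcw⟩ => surjective_of_weight_gt hT hc hcw⟩
  obtain ⟨c, hc, hcw⟩ := exists_weight_gt_of_surjective hT hsurj
  exact ⟨fun j => (hcw j).imp fun _ => And.left, c, hc, hcw⟩

/-- Let `T` be the weighted shift-type operator on `ℓ¹` determined by `φ : ℕ → Option ℕ` and a
bounded weight `w` (i.e. `(T a)(j) = Σ_{i : φ(i) = some j} w(i)·a(i)`). Then `T` is surjective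
iff (a) every `j` is of the form `φ(i) = some j`, and (b) there exists `c > 0` such that
every `j` admits `i` with `φ(i) = some j` and `|w(i)| > c`. -/
theorem stmt12 (φ : ℕ → Option ℕ) (w : ℕ → ℂ) (hw : ∃ C : ℝ, ∀ i, ‖w i‖ ≤ C)
    (T : lp (fun _ : ℕ => ℂ) 1 →L[ℂ] lp (fun _ : ℕ => ℂ) 1)
    (hT : ∀ (a : lp (fun _ : ℕ => ℂ) 1) (j : ℕ),
      T a j = ∑' i : {i : ℕ // φ i = some j}, w i * a i) :
    Function.Surjective T ↔
      ((∀ j : ℕ, ∃ i : ℕ, φ i = some j) ∧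
        ∃ c > (0 : ℝ), ∀ j : ℕ, ∃ i : ℕ, φ i = some j ∧ c < ‖w i‖) :=
  stmt12_general φ w T hT
end

section
/- Let φ : ℕ → Option ℕ and let w : ℕ → ℂ be bounded. Suppose λ ∈ ℂ with λ ≠ 0 and a ∈ ℓ¹ is a nonzero eigenvector of T_{w,φ} for λ (T_{w,φ} a = λ·a) whose support S = {i : a(i) ≠ 0} is finite. Then |λ| ≥ inf_{i ∈ S} |w(i)|. -/
/-- Let `T` be the weighted shift-type operator on `ℓ¹` determined by `φ : ℕ → Option ℕ` and a
bounded weight `w` (i.e. `(T a)(j) = Σ_{i : φ(i) = some j} w(i)·a(i)`). If `λ ≠ 0` and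
`a ≠ 0` is an eigenvector of `T` for `λ` with finite support `S = {i : a i ≠ 0}`, then
`|λ| ≥ inf_{i ∈ S} |w(i)|`. -/
theorem stmt15 (φ : ℕ → Option ℕ) (w : ℕ → ℂ) (hw : ∃ C : ℝ, ∀ i, ‖w i‖ ≤ C)
    (T : lp (fun _ : ℕ => ℂ) 1 →L[ℂ] lp (fun _ : ℕ => ℂ) 1)
    (hT : ∀ (a : lp (fun _ : ℕ => ℂ) 1) (j : ℕ),
      T a j = ∑' i : {i : ℕ // φ i = some j}, w i * a i)
    (lam : ℂ) (hlam : lam ≠ 0)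
    (a : lp (fun _ : ℕ => ℂ) 1) (ha : a ≠ 0) (heig : T a = lam • a)
    (hfin : {i : ℕ | a i ≠ 0}.Finite) :
    (⨅ i : {i : ℕ // a i ≠ 0}, ‖w i‖) ≤ ‖lam‖ := by
  classical
  set F : Finset ℕ := hfin.toFinset with hF
  have hmemF : ∀ i, i ∈ F ↔ a i ≠ 0 := fun i => hfin.mem_toFinset
  -- the support is nonempty
  have hne : F.Nonempty := by
    rw [Finset.nonempty_iff_ne_empty]
    intro h
    apply ha
    ext i
    have : i ∉ F := by simp [h]
    simpa [hmemF i, not_not] using this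
  -- key pointwise eigenvalue equation as a finite sum
  have key : ∀ j, lam * a j = ∑ i ∈ F.filter (fun i => φ i = some j), w i * a i := by
    intro j
    have h1 : T a j = lam * a j := by
      rw [heig, lp.coeFn_smul, Pi.smul_apply, smul_eq_mul]
    rw [← h1, hT]
    have h2 : (∑' i : {i : ℕ // φ i = some j}, w i * a i)
        = ∑' i : ℕ, Set.indicator {i : ℕ | φ i = some j} (fun i => w i * a i) i :=
      tsum_subtype {i : ℕ | φ i = some j} (fun i => w i * a i)
    rw [h2, tsum_eq_sum (s := F) (f := fun i =>
        Set.indicator {i : ℕ | φ i = some j} (fun i => w i * a i) i)]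
    · rw [Finset.sum_filter]
      refine Finset.sum_congr rfl fun i _ => ?_
      by_cases h : φ i = some j <;> simp [Set.indicator_apply, h]
    · intro i hi
      have : a i = 0 := by simpa [hmemF i, not_not] using hi
      simp [Set.indicator_apply, this]
  -- every j in the support has a preimage in the support
  have fiber_ne : ∀ j ∈ F, (F.filter (fun i => φ i = some j)).Nonempty := by
    intro j hj
    rw [Finset.nonempty_iff_ne_empty]
    intro h
    have hk := key j
    rw [h, Finset.sum_empty] at hk
    exact (hmemF j).1 hj (by
      rcases mul_eq_zero.1 hk with h' | h'
      · exact absurd h' hlam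
      · exact h')
  -- counting: the fibers are disjoint subsets of F, each nonempty, |F| many
  have hcard_sum : ∑ j ∈ F, (F.filter (fun i => φ i = some j)).card ≤ F.card := by
    rw [← Finset.card_biUnion]
    · exact Finset.card_le_card (by
        intro i hi
        rcases Finset.mem_biUnion.1 hi with ⟨j, _, hij⟩
        exact (Finset.mem_filter.1 hij).1)
    · intro j hj j' hj' hjj'
      refine Finset.disjoint_left.2 fun i hi hi' => hjj' ?_
      have h1 := (Finset.mem_filter.1 hi).2
      have h2 := (Finset.mem_filter.1 hi').2
      exact Option.some_injective ℕ (h1 ▸ h2 ▸ rfl)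
  -- choose the support point with minimal |a|
  obtain ⟨j₀, hj₀, hmin⟩ := Finset.exists_min_image F (fun j => ‖a j‖) hne
  -- the fiber over j₀ is a singleton
  have hcard1 : (F.filter (fun i => φ i = some j₀)).card = 1 := by
    have h1 : ∀ j ∈ F, 1 ≤ (F.filter (fun i => φ i = some j)).card := fun j hj =>
      Finset.card_pos.2 (fiber_ne j hj)
    by_contra h
    have h2 : 1 < (F.filter (fun i => φ i = some j₀)).card :=
      lt_of_le_of_ne (h1 j₀ hj₀) (Ne.symm h)
    have hlt : ∑ j ∈ F, (1 : ℕ) < ∑ j ∈ F, (F.filter (fun i => φ i = some j)).card :=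
      Finset.sum_lt_sum h1 ⟨j₀, hj₀, h2⟩
    simp only [Finset.sum_const, smul_eq_mul, mul_one] at hlt
    omega
  obtain ⟨i, hi⟩ := Finset.card_eq_one.1 hcard1
  have hiF : i ∈ F := (Finset.mem_filter.1 (hi ▸ Finset.mem_singleton_self i)).1
  have hai : a i ≠ 0 := (hmemF i).1 hiF
  have haj₀ : a j₀ ≠ 0 := (hmemF j₀).1 hj₀
  have keyj₀ : lam * a j₀ = w i * a i := by
    rw [key j₀, hi, Finset.sum_singleton]
  -- the infimum
  set m : ℝ := ⨅ i : {i : ℕ // a i ≠ 0}, ‖w i‖ with hm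
  have hm0 : 0 ≤ m := Real.iInf_nonneg fun _ => norm_nonneg _
  have hbdd : BddBelow (Set.range fun i : {i : ℕ // a i ≠ 0} => ‖w i.1‖) :=
    ⟨0, by rintro x ⟨i, rfl⟩; exact norm_nonneg _⟩
  have hmle : m ≤ ‖w i‖ := ciInf_le hbdd ⟨i, hai⟩
  have hchain : m * ‖a j₀‖ ≤ ‖lam‖ * ‖a j₀‖ := by
    calc m * ‖a j₀‖ ≤ m * ‖a i‖ := mul_le_mul_of_nonneg_left (hmin i hiF) hm0
      _ ≤ ‖w i‖ * ‖a i‖ := mul_le_mul_of_nonneg_right hmle (norm_nonneg _)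
      _ = ‖w i * a i‖ := (norm_mul _ _).symm
      _ = ‖lam * a j₀‖ := by rw [keyj₀]
      _ = ‖lam‖ * ‖a j₀‖ := norm_mul _ _
  exact le_of_mul_le_mul_right hchain (norm_pos_iff.2 haj₀)
end

section
/- Let φ : ℕ → Option ℕ be injective with φ(i) ≠ none for every i (modeling an injective base point preserving map f), and let w : ℕ → ℂ be bounded. Suppose λ ∈ ℂ with λ ≠ 0 is an eigenvalue of T_{w,φ} that admits no eigenvector with finite support. Then every eigenvector a ∈ ℓ¹ of T_{w,φ} for λ satisfies inf_{i ∈ S} |w(i)| < |λ| < sup_{i ∈ S} |w(i)|, where S = {i : a(i) ≠ 0} is the support of a. -/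
set_option maxHeartbeats 1000000 in
/-- Let `φ : ℕ → Option ℕ` be injective with `φ(i) ≠ none` for every `i`, and let `T` be the
weighted shift-type operator on `ℓ¹` determined by `φ` and a bounded weight `w` (i.e.
`(T a)(j) = Σ_{i : φ(i) = some j} w(i)·a(i)`). Suppose `λ ≠ 0` is an eigenvalue of `T` that
admits no eigenvector with finite support. Then every eigenvector `a` of `T` for `λ`
satisfies `inf_{i ∈ S} |w(i)| < |λ| < sup_{i ∈ S} |w(i)|`, where `S = {i : a i ≠ 0}`. -/
theorem stmt16 (φ : ℕ → Option ℕ) (hφinj : Function.Injective φ)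
    (hφ : ∀ i : ℕ, φ i ≠ none)
    (w : ℕ → ℂ) (hw : ∃ C : ℝ, ∀ i, ‖w i‖ ≤ C)
    (T : lp (fun _ : ℕ => ℂ) 1 →L[ℂ] lp (fun _ : ℕ => ℂ) 1)
    (hT : ∀ (a : lp (fun _ : ℕ => ℂ) 1) (j : ℕ),
      T a j = ∑' i : {i : ℕ // φ i = some j}, w i * a i)
    (lam : ℂ) (hlam : lam ≠ 0)
    (heigen : ∃ a : lp (fun _ : ℕ => ℂ) 1, a ≠ 0 ∧ T a = lam • a)
    (hnofin : ¬ ∃ a : lp (fun _ : ℕ => ℂ) 1, a ≠ 0 ∧ T a = lam • a ∧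
      {i : ℕ | a i ≠ 0}.Finite) :
    ∀ a : lp (fun _ : ℕ => ℂ) 1, a ≠ 0 → T a = lam • a →
      (⨅ i : {i : ℕ // a i ≠ 0}, ‖w i‖) < ‖lam‖ ∧
        ‖lam‖ < ⨆ i : {i : ℕ // a i ≠ 0}, ‖w i‖ := by
  classical
  obtain ⟨C, hC⟩ := hw
  set f : ℕ → ℕ := fun i => (φ i).get (Option.ne_none_iff_isSome.mp (hφ i)) with hfdef
  have hfφ : ∀ i, φ i = some (f i) := fun i => (Option.some_get _).symm
  have hfinj : Function.Injective f := fun i j h => hφinj (by rw [hfφ i, hfφ j, h])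
  -- general pointwise formulas for T
  have hTgen : ∀ (v : lp (fun _ : ℕ => ℂ) 1) (i : ℕ), T v (f i) = w i * v i := by
    intro v i
    rw [hT v (f i)]
    refine tsum_eq_single (⟨i, hfφ i⟩ : {i' : ℕ // φ i' = some (f i)}) ?_
    rintro ⟨b, hb⟩ hne
    exact absurd (Subtype.ext (hφinj (hb.trans (hfφ i).symm))) hne
  have hTgen0 : ∀ (v : lp (fun _ : ℕ => ℂ) 1) (j : ℕ), (∀ i, f i ≠ j) → T v j = 0 := by
    intro v j hj
    rw [hT v j]
    haveI : IsEmpty {i : ℕ // φ i = some j} :=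
      ⟨fun ⟨i, hi⟩ => hj i (Option.some_injective _ ((hfφ i).symm.trans hi))⟩
    exact tsum_empty
  intro a ha0 haT
  have hTa : ∀ j, T a j = lam * a j := by
    intro j
    rw [haT, lp.coeFn_smul, Pi.smul_apply, smul_eq_mul]
  have hE1 : ∀ i, w i * a i = lam * a (f i) := fun i => by
    rw [← hTgen a i, hTa (f i)]
  have hE2 : ∀ j, (∀ i, f i ≠ j) → a j = 0 := by
    intro j hj
    have h0 : (0 : ℂ) = lam * a j := by rw [← hTa j, hTgen0 a j hj]
    rcases mul_eq_zero.mp h0.symm with h | h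
    · exact absurd h hlam
    · exact h
  -- summability and finiteness of large-norm sets
  have hsum : Summable (fun i => ‖a i‖) := by
    have := (lp.memℓp a).summable (p := 1) (by norm_num)
    simpa using this
  have hfin : ∀ c : ℝ, 0 < c → {i : ℕ | c ≤ ‖a i‖}.Finite := by
    intro c hc
    have h := hsum.tendsto_cofinite_zero.eventually (gt_mem_nhds hc)
    rw [Filter.eventually_cofinite] at h
    refine h.subset ?_
    intro i hi
    simpa using not_lt.2 hi
  -- no cycles through the support
  have hcycle : ∀ i : ℕ, a i ≠ 0 → ∀ n : ℕ, 0 < n → f^[n] i ≠ i := by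
    intro i hai n hn hni
    apply hnofin
    set O : Finset ℕ := (Finset.range n).image (fun k => f^[k] i) with hO
    have hiO : i ∈ O := Finset.mem_image.2 ⟨0, Finset.mem_range.2 hn, rfl⟩
    have hfO : ∀ x ∈ O, f x ∈ O := by
      intro x hx
      obtain ⟨k, hk, rfl⟩ := Finset.mem_image.1 hx
      have hk' := Finset.mem_range.1 hk
      have hfk : f (f^[k] i) = f^[k + 1] i := (Function.iterate_succ_apply' f k i).symm
      rcases eq_or_lt_of_le (Nat.succ_le_of_lt hk') with h | h
      · refine Finset.mem_image.2 ⟨0, Finset.mem_range.2 hn, ?_⟩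
        rw [Function.iterate_zero_apply, hfk, show k + 1 = n from h, hni]
      · exact Finset.mem_image.2 ⟨k + 1, Finset.mem_range.2 h, hfk.symm⟩
    have hfO' : ∀ x : ℕ, f x ∈ O → x ∈ O := by
      intro x hx
      obtain ⟨k, hk, hkx⟩ := Finset.mem_image.1 hx
      have hk' := Finset.mem_range.1 hk
      rcases Nat.eq_zero_or_pos k with rfl | hkpos
      · have : f (f^[n - 1] i) = f x := by
          rw [Function.iterate_zero_apply] at hkx
          rw [← Function.iterate_succ_apply' f (n - 1) i, Nat.succ_eq_add_one,
            Nat.sub_add_cancel hn, hni, hkx]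
        have := hfinj this
        exact Finset.mem_image.2 ⟨n - 1, Finset.mem_range.2 (by omega), this⟩
      · have : f (f^[k - 1] i) = f x := by
          rw [← Function.iterate_succ_apply' f (k - 1) i, Nat.succ_eq_add_one,
            Nat.sub_add_cancel hkpos, hkx]
        have := hfinj this
        exact Finset.mem_image.2 ⟨k - 1, Finset.mem_range.2 (by omega), this⟩
    have hOr : ∀ x ∈ O, ∃ y, f y = x := by
      intro x hx
      obtain ⟨k, hk, hkx⟩ := Finset.mem_image.1 hx
      rcases Nat.eq_zero_or_pos k with rfl | hkpos
      · refine ⟨f^[n - 1] i, ?_⟩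
        rw [Function.iterate_zero_apply] at hkx
        rw [← Function.iterate_succ_apply' f (n - 1) i, Nat.succ_eq_add_one,
          Nat.sub_add_cancel hn, hni, hkx]
      · refine ⟨f^[k - 1] i, ?_⟩
        rw [← Function.iterate_succ_apply' f (k - 1) i, Nat.succ_eq_add_one,
          Nat.sub_add_cancel hkpos, hkx]
    set b : ∀ _ : ℕ, ℂ := fun j => if j ∈ O then a j else 0 with hb
    have hbval : ∀ j, b j = if j ∈ O then a j else 0 := fun _ => rfl
    have hbmem : Memℓp b 1 := by
      apply memℓp_gen
      apply summable_of_ne_finset_zero (s := O)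
      intro j hj
      rw [hbval, if_neg hj]
      simp
    set B : lp (fun _ : ℕ => ℂ) 1 := ⟨b, hbmem⟩ with hB
    have hBcoe : ∀ j, B j = b j := fun j => rfl
    refine ⟨B, ?_, ?_, ?_⟩
    · intro h
      apply hai
      have : B i = 0 := by rw [h]; exact congrFun (lp.coeFn_zero _ _) i
      rwa [hBcoe, hbval, if_pos hiO] at this
    · apply lp.ext
      funext j
      have hrhs : (lam • B) j = lam * b j := by
        rw [lp.coeFn_smul, Pi.smul_apply, smul_eq_mul, hBcoe]
      by_cases hj : ∃ i', f i' = j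
      · obtain ⟨i', rfl⟩ := hj
        rw [hTgen B i', hrhs, hBcoe]
        by_cases hi' : i' ∈ O
        · rw [hbval, hbval, if_pos hi', if_pos (hfO i' hi')]
          exact hE1 i'
        · have hfi' : f i' ∉ O := fun hmem => hi' (hfO' i' hmem)
          rw [hbval, hbval, if_neg hi', if_neg hfi']
          simp
      · push_neg at hj
        rw [hTgen0 B j hj, hrhs]
        have hjO : j ∉ O := fun hmem => by
          obtain ⟨y, hy⟩ := hOr j hmem
          exact hj y hy
        rw [hbval, if_neg hjO]
        simp
    · refine O.finite_toSet.subset ?_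
      intro j hj
      by_contra hjO
      have hjO' : j ∉ O := fun hh => hjO (Finset.mem_coe.2 hh)
      exact hj (by rw [hBcoe, hbval, if_neg hjO'])
  -- nonemptiness of the support
  obtain ⟨i₀, hi₀⟩ : ∃ i, a i ≠ 0 := by
    by_contra h
    push_neg at h
    exact ha0 (lp.ext (funext fun i => by
      rw [h i, lp.coeFn_zero, Pi.zero_apply]))
  haveI hne : Nonempty {i : ℕ // a i ≠ 0} := ⟨⟨i₀, hi₀⟩⟩
  have hc0 : 0 < ‖a i₀‖ := norm_pos_iff.2 hi₀
  have hnormeq : ∀ i, ‖w i‖ * ‖a i‖ = ‖lam‖ * ‖a (f i)‖ := fun i => by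
    rw [← norm_mul, ← norm_mul, hE1 i]
  have hlampos : 0 < ‖lam‖ := norm_pos_iff.2 hlam
  constructor
  · -- inf < ‖lam‖
    by_contra h
    push_neg at h
    have hwge : ∀ i, a i ≠ 0 → ‖lam‖ ≤ ‖w i‖ := fun i hi =>
      h.trans (ciInf_le (f := fun i : {i : ℕ // a i ≠ 0} => ‖w (i : ℕ)‖)
        ⟨0, by rintro x ⟨i, rfl⟩; exact norm_nonneg _⟩ ⟨i, hi⟩)
    set u : ℕ → ℕ := fun n => f^[n] i₀ with hu
    have hkey : ∀ n, a (u n) ≠ 0 ∧ ‖a i₀‖ ≤ ‖a (u n)‖ := by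
      intro n
      induction n with
      | zero => exact ⟨hi₀, le_refl _⟩
      | succ n ih =>
        obtain ⟨h1, h2⟩ := ih
        have hu' : u (n + 1) = f (u n) := Function.iterate_succ_apply' f n i₀
        have heq := hnormeq (u n)
        have hwn := hwge (u n) h1
        have h3 : ‖a (u n)‖ ≤ ‖a (f (u n))‖ := by
          have hpos : 0 < ‖a (u n)‖ := norm_pos_iff.2 h1
          nlinarith
        have h4 : a (f (u n)) ≠ 0 := by
          intro hz
          rw [hz, norm_zero, mul_zero] at heq
          have : ‖w (u n)‖ * ‖a (u n)‖ ≠ 0 :=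
            mul_ne_zero (ne_of_gt (lt_of_lt_of_le hlampos hwn)) (norm_ne_zero_iff.2 h1)
          exact this heq
        rw [hu']
        exact ⟨h4, h2.trans h3⟩
    have huinj : Function.Injective u := by
      intro m n hmn
      by_contra hne'
      rcases Nat.lt_or_ge m n with hlt | hge
      · have : f^[n - m] (u m) = u m := by
          show f^[n - m] (f^[m] i₀) = u m
          rw [← Function.iterate_add_apply, show n - m + m = n from by omega]
          exact hmn.symm
        exact hcycle (u m) (hkey m).1 (n - m) (by omega) this
      · have hlt : n < m := by omega
        have : f^[m - n] (u n) = u n := by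
          show f^[m - n] (f^[n] i₀) = u n
          rw [← Function.iterate_add_apply, show m - n + n = m from by omega]
          exact hmn
        exact hcycle (u n) (hkey n).1 (m - n) (by omega) this
    have : {i : ℕ | ‖a i₀‖ ≤ ‖a i‖}.Infinite :=
      Set.infinite_of_injective_forall_mem huinj (fun n => (hkey n).2)
    exact this (hfin _ hc0)
  · -- ‖lam‖ < sup
    by_contra h
    push_neg at h
    have bddA : BddAbove (Set.range fun i : {i : ℕ // a i ≠ 0} => ‖w i‖) :=
      ⟨C, by rintro x ⟨i, rfl⟩; exact hC i⟩
    have hwle : ∀ i, a i ≠ 0 → ‖w i‖ ≤ ‖lam‖ := fun i hi =>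
      (le_ciSup (f := fun i : {i : ℕ // a i ≠ 0} => ‖w (i : ℕ)‖) bddA ⟨i, hi⟩).trans h
    have hpred : ∀ j, a j ≠ 0 → ∃ i, f i = j ∧ a i ≠ 0 := by
      intro j hj
      have : ∃ i, f i = j := by
        by_contra hno
        push_neg at hno
        exact hj (hE2 j hno)
      obtain ⟨i, hi⟩ := this
      refine ⟨i, hi, ?_⟩
      intro hz
      have := hE1 i
      rw [hz, mul_zero, hi] at this
      exact hj (by rcases mul_eq_zero.mp this.symm with h' | h'
                   exacts [absurd h' hlam, h'])
    set P : {i : ℕ // a i ≠ 0} → {i : ℕ // a i ≠ 0} := fun j =>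
      ⟨(hpred j j.2).choose, (hpred j j.2).choose_spec.2⟩ with hP
    have hPf : ∀ j, f (P j : ℕ) = (j : ℕ) := fun j => (hpred j j.2).choose_spec.1
    set u : ℕ → {i : ℕ // a i ≠ 0} := fun n => P^[n] ⟨i₀, hi₀⟩ with hu
    have hPnorm : ∀ j : {i : ℕ // a i ≠ 0}, ‖a (j : ℕ)‖ ≤ ‖a (P j : ℕ)‖ := by
      intro j
      have heq := hnormeq (P j : ℕ)
      rw [hPf j] at heq
      have hwn := hwle (P j : ℕ) (P j).2
      have hpos : 0 < ‖a (P j : ℕ)‖ := norm_pos_iff.2 (P j).2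
      nlinarith
    have hkey : ∀ n, ‖a i₀‖ ≤ ‖a (u n : ℕ)‖ := by
      intro n
      induction n with
      | zero => exact le_refl _
      | succ n ih =>
        have hu' : u (n + 1) = P (u n) := Function.iterate_succ_apply' P n _
        rw [hu']
        exact ih.trans (hPnorm (u n))
    have hback : ∀ k n : ℕ, k ≤ n → f^[k] ((u n : ℕ)) = (u (n - k) : ℕ) := by
      intro k
      induction k with
      | zero => intro n _; simp
      | succ k ih =>
        intro n hkn
        rw [Function.iterate_succ_apply', ih n (by omega)]
        have h1 : n - k = (n - (k + 1)) + 1 := by omega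
        rw [h1]
        have : u ((n - (k + 1)) + 1) = P (u (n - (k + 1))) :=
          Function.iterate_succ_apply' P _ _
        rw [this, hPf]
    have huinj : Function.Injective (fun n => (u n : ℕ)) := by
      intro m n hmn
      simp only at hmn
      by_contra hne'
      rcases Nat.lt_or_ge m n with hlt | hge
      · have := hback (n - m) n (by omega)
        rw [show n - (n - m) = m from by omega, ← hmn] at this
        exact hcycle (u m : ℕ) (u m).2 (n - m) (by omega) this
      · have hlt : n < m := by omega
        have := hback (m - n) m (by omega)
        rw [show m - (m - n) = n from by omega, hmn] at this
        exact hcycle (u n : ℕ) (u n).2 (m - n) (by omega) this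
    have : {i : ℕ | ‖a i₀‖ ≤ ‖a i‖}.Infinite :=
      Set.infinite_of_injective_forall_mem huinj (fun n => hkey n)
    exact this (hfin _ hc0)
end

section
/- Let φ : ℕ → Option ℕ be injective with φ(i) ≠ none for every i (modeling an injective base point preserving map f), and take the constant weight w ≡ 1. If λ ∈ ℂ with λ ≠ 0 is an eigenvalue of T_{1,φ} on ℓ¹, then λ admits an eigenvector with finite support, and λ is a root of unity: there exists n ≥ 1 with λ^n = 1. -/
/-!
Write `φ = some ∘ f`. Then `T` is the pushforward along the injective map `f`:
`(T a) (f i) = a i`, and `T a` vanishes off `range f`. Such an operator is an isometry of `ℓ¹`,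
so every eigenvalue `λ` has `‖λ‖ = 1`, and an eigenvector `a` satisfies `a i = λ a (f i)`,
hence `‖a‖` is constant along `f`-orbits. As `a` vanishes at infinity, the orbit of a point `x`
with `a x ≠ 0` cannot be injective, so `x` is periodic, say of period `n`; then `a x = λ ^ n a x`
gives `λ ^ n = 1`, and restricting `a` to the finite, `f`-invariant orbit of `x` yields an
eigenvector with finite support.
-/

open Function Filter Topology Set

theorem Function.Injective.mem_periodicPts_of_tendsto_cofinite {α β : Type*}
    [TopologicalSpace β] [T1Space β] {f : α → α} {g : α → β} {c : β} {x : α}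
    (hf : Injective f) (hg : Tendsto g cofinite (𝓝 c)) (hgf : g ∘ f = g) (hx : g x ≠ c) :
    x ∈ periodicPts f := by
  by_contra hper
  have horbit : Injective fun k => f^[k] x := by
    intro k m hkm
    by_contra hne
    rcases Nat.lt_or_gt_of_ne hne with h | h
    · exact hper (mk_mem_periodicPts (Nat.sub_pos_of_lt h) (iterate_cancel hf hkm.symm))
    · exact hper (mk_mem_periodicPts (Nat.sub_pos_of_lt h) (iterate_cancel hf hkm))
  have hconst : (g ∘ fun k => f^[k] x) = fun _ => g x :=
    funext fun k => congrFun (iterate_invariant hgf k) x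
  exact hx (tendsto_const_nhds_iff.mp (hconst ▸ hg.comp horbit.tendsto_cofinite))

namespace Function.IsPeriodicPt

variable {α : Type*} {f : α → α} {n : ℕ} {x : α}

theorem iterate_eq_apply_iterate (hx : IsPeriodicPt f n x) (hn : 0 < n) (k : ℕ) :
    f^[k] x = f (f^[k + n - 1] x) := by
  have hk : k + n - 1 + 1 = k + n := by omega
  rw [← iterate_succ_apply' f, Nat.succ_eq_add_one, hk, iterate_add_apply, hx.eq]

theorem finite_range_iterate (hx : IsPeriodicPt f n x) (hn : 0 < n) :
    (range fun k => f^[k] x).Finite :=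
  ((finite_Iio n).image fun k => f^[k] x).subset <| by
    rintro _ ⟨k, rfl⟩
    exact ⟨k % n, Nat.mod_lt k hn, hx.iterate_mod_apply k⟩

theorem range_iterate_subset_range (hx : IsPeriodicPt f n x) (hn : 0 < n) :
    (range fun k => f^[k] x) ⊆ range f := by
  rintro _ ⟨k, rfl⟩
  exact ⟨_, (hx.iterate_eq_apply_iterate hn k).symm⟩

theorem apply_mem_range_iterate_iff (hx : IsPeriodicPt f n x) (hn : 0 < n) (hf : Injective f)
    {i : α} : f i ∈ (range fun k => f^[k] x) ↔ i ∈ range fun k => f^[k] x := by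
  constructor
  · rintro ⟨k, hk⟩
    exact ⟨k + n - 1, hf ((hx.iterate_eq_apply_iterate hn k).symm.trans hk)⟩
  · rintro ⟨k, rfl⟩
    exact ⟨k + 1, iterate_succ_apply' f k x⟩

end Function.IsPeriodicPt

theorem lp.hasSum_norm_one {ι : Type*} {E : ι → Type*} [∀ i, NormedAddCommGroup (E i)]
    (a : lp E 1) : HasSum (fun i => ‖a i‖) ‖a‖ := by
  simpa using lp.hasSum_norm (p := 1) (by simp) a

section Pushforward

variable {ι 𝕜 : Type*} [NormedField 𝕜]

structure IsPushforwardAlong (f : ι → ι)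
    (T : lp (fun _ : ι => 𝕜) 1 → lp (fun _ : ι => 𝕜) 1) : Prop where
  apply_apply : ∀ a i, T a (f i) = a i
  apply_of_notMem_range : ∀ a j, j ∉ range f → T a j = 0

namespace IsPushforwardAlong

variable {f : ι → ι} {T : lp (fun _ : ι => 𝕜) 1 → lp (fun _ : ι => 𝕜) 1}
  {a : lp (fun _ : ι => 𝕜) 1} {c : 𝕜}

theorem of_tsum_subtype {φ : ι → Option ι} (hφ : Injective φ) (hf : ∀ i, φ i = some (f i))
    (hT : ∀ a j, T a j = ∑' i : {i // φ i = some j}, a i) : IsPushforwardAlong f T where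
  apply_apply a i := by
    rw [hT]
    exact tsum_eq_single (⟨i, hf i⟩ : {i' // φ i' = some (f i)})
      fun (b : {i' // φ i' = some (f i)}) hb =>
        absurd (Subtype.ext (hφ (b.2.trans (hf i).symm))) hb
  apply_of_notMem_range a j hj := by
    have : IsEmpty {i // φ i = some j} :=
      ⟨fun ⟨i, hi⟩ => hj ⟨i, Option.some_injective _ ((hf i).symm.trans hi)⟩⟩
    rw [hT, tsum_empty]

theorem norm_apply (hT : IsPushforwardAlong f T) (hf : Injective f) : ‖T a‖ = ‖a‖ := by
  have hsupp : support (fun j => ‖T a j‖) ⊆ range f := fun j hj => by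
    by_contra h
    simp [hT.apply_of_notMem_range a j h] at hj
  rw [← (lp.hasSum_norm_one (T a)).tsum_eq, ← hf.tsum_eq hsupp]
  simp only [hT.apply_apply]
  exact (lp.hasSum_norm_one a).tsum_eq

theorem norm_eq_one_of_apply_eq_smul (hT : IsPushforwardAlong f T) (hf : Injective f)
    (ha0 : a ≠ 0) (ha : T a = c • a) : ‖c‖ = 1 := by
  have : ‖c‖ * ‖a‖ = 1 * ‖a‖ := by rw [← norm_smul, ← ha, hT.norm_apply hf, one_mul]
  exact mul_right_cancel₀ (norm_ne_zero_iff.mpr ha0) this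

theorem apply_eq_mul_apply (hT : IsPushforwardAlong f T) (ha : T a = c • a) (i : ι) :
    a i = c * a (f i) := by
  rw [← hT.apply_apply a i, ha, lp.coeFn_smul, Pi.smul_apply, smul_eq_mul]

theorem apply_eq_pow_mul_apply_iterate (hT : IsPushforwardAlong f T) (ha : T a = c • a)
    (k : ℕ) (i : ι) : a i = c ^ k * a (f^[k] i) := by
  induction k with
  | zero => simp
  | succ k ih => rw [ih, iterate_succ_apply', hT.apply_eq_mul_apply ha, pow_succ, mul_assoc]

theorem eq_smul_of_apply_eq_mul (hT : IsPushforwardAlong f T) (h : ∀ i, a i = c * a (f i))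
    (h0 : ∀ j ∉ range f, a j = 0) : T a = c • a := by
  ext j
  rw [lp.coeFn_smul, Pi.smul_apply, smul_eq_mul]
  by_cases hj : j ∈ range f
  · obtain ⟨i, rfl⟩ := hj
    rw [hT.apply_apply, h i]
  · rw [hT.apply_of_notMem_range a j hj, h0 j hj, mul_zero]

theorem mem_periodicPts_of_apply_eq_smul (hT : IsPushforwardAlong f T) (hf : Injective f)
    (ha0 : a ≠ 0) (ha : T a = c • a) {x : ι} (hx : a x ≠ 0) : x ∈ periodicPts f := by
  have hc := hT.norm_eq_one_of_apply_eq_smul hf ha0 ha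
  refine hf.mem_periodicPts_of_tendsto_cofinite (g := fun i => ‖a i‖)
    (lp.hasSum_norm_one a).summable.tendsto_cofinite_zero (funext fun i => ?_)
    (norm_ne_zero_iff.mpr hx)
  simp [hT.apply_eq_mul_apply ha i, hc]

theorem pow_eq_one_of_isPeriodicPt (hT : IsPushforwardAlong f T) (ha : T a = c • a) {n : ℕ}
    {x : ι} (hx : IsPeriodicPt f n x) (hax : a x ≠ 0) : c ^ n = 1 := by
  have := hT.apply_eq_pow_mul_apply_iterate ha n x
  rw [hx.eq] at this
  exact (mul_eq_right₀ hax).mp this.symm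

theorem exists_eigenvector_finite_support (hT : IsPushforwardAlong f T) (hf : Injective f)
    (ha : T a = c • a) {n : ℕ} (hn : 0 < n) {x : ι} (hx : IsPeriodicPt f n x) (hax : a x ≠ 0) :
    ∃ b : lp (fun _ : ι => 𝕜) 1, b ≠ 0 ∧ T b = c • b ∧ {i | b i ≠ 0}.Finite := by
  set S := range fun k => f^[k] x
  have hfin : (support (S.indicator a)).Finite :=
    (hx.finite_range_iterate hn).subset support_indicator_subset
  let b : lp (fun _ : ι => 𝕜) 1 := ⟨S.indicator a, (memℓp_zero hfin).of_exponent_ge zero_le⟩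
  have hbx : b x = a x := indicator_of_mem (mem_range_self 0) a
  refine ⟨b, fun h => hax (by rw [← hbx, h]; rfl),
    hT.eq_smul_of_apply_eq_mul (fun i => ?_) (fun j hj => ?_), hfin⟩
  · show S.indicator a i = c * S.indicator a (f i)
    have hSf := hx.apply_mem_range_iterate_iff hn hf (i := i)
    by_cases hi : i ∈ S
    · rw [indicator_of_mem hi, indicator_of_mem (hSf.mpr hi), hT.apply_eq_mul_apply ha i]
    · rw [indicator_of_notMem hi, indicator_of_notMem (mt hSf.mp hi), mul_zero]
  · exact indicator_of_notMem (fun h => hj (hx.range_iterate_subset_range hn h)) a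

end IsPushforwardAlong

end Pushforward

theorem stmt17_general (φ : ℕ → Option ℕ) (hφinj : Function.Injective φ)
    (hφ : ∀ i : ℕ, φ i ≠ none)
    (T : lp (fun _ : ℕ => ℂ) 1 →L[ℂ] lp (fun _ : ℕ => ℂ) 1)
    (hT : ∀ (a : lp (fun _ : ℕ => ℂ) 1) (j : ℕ),
      T a j = ∑' i : {i : ℕ // φ i = some j}, a i)
    (lam : ℂ)
    (heigen : ∃ a : lp (fun _ : ℕ => ℂ) 1, a ≠ 0 ∧ T a = lam • a) :
    (∃ a : lp (fun _ : ℕ => ℂ) 1, a ≠ 0 ∧ T a = lam • a ∧ {i : ℕ | a i ≠ 0}.Finite) ∧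
      ∃ n : ℕ, 1 ≤ n ∧ lam ^ n = 1 := by
  choose f hf using fun i => Option.ne_none_iff_exists'.mp (hφ i)
  have hfinj : Injective f := fun i j h => hφinj (by rw [hf, hf, h])
  have hTf : IsPushforwardAlong f T := .of_tsum_subtype hφinj hf hT
  obtain ⟨a, ha0, ha⟩ := heigen
  obtain ⟨x, hx⟩ : ∃ x, a x ≠ 0 := by
    by_contra! h
    exact ha0 (lp.ext (funext h))
  obtain ⟨n, hn, hxn⟩ :=
    mem_periodicPts.mp (hTf.mem_periodicPts_of_apply_eq_smul hfinj ha0 ha hx)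
  exact ⟨hTf.exists_eigenvector_finite_support hfinj ha hn hxn hx, n, hn,
    hTf.pow_eq_one_of_isPeriodicPt ha hxn hx⟩

/-- Let `φ : ℕ → Option ℕ` be injective with `φ(i) ≠ none` for every `i`, and let `T` be the
shift-type operator on `ℓ¹` determined by `φ` and the constant weight `w ≡ 1` (i.e.
`(T a)(j) = Σ_{i : φ(i) = some j} a(i)`). If `λ ≠ 0` is an eigenvalue of `T`, then `λ` admits
an eigenvector with finite support, and `λ` is a root of unity: `λ^n = 1` for some `n ≥ 1`. -/
theorem stmt17 (φ : ℕ → Option ℕ) (hφinj : Function.Injective φ)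
    (hφ : ∀ i : ℕ, φ i ≠ none)
    (T : lp (fun _ : ℕ => ℂ) 1 →L[ℂ] lp (fun _ : ℕ => ℂ) 1)
    (hT : ∀ (a : lp (fun _ : ℕ => ℂ) 1) (j : ℕ),
      T a j = ∑' i : {i : ℕ // φ i = some j}, a i)
    (lam : ℂ) (hlam : lam ≠ 0)
    (heigen : ∃ a : lp (fun _ : ℕ => ℂ) 1, a ≠ 0 ∧ T a = lam • a) :
    (∃ a : lp (fun _ : ℕ => ℂ) 1, a ≠ 0 ∧ T a = lam • a ∧ {i : ℕ | a i ≠ 0}.Finite) ∧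
      ∃ n : ℕ, 1 ≤ n ∧ lam ^ n = 1 :=
  stmt17_general φ hφinj hφ T hT lam heigen
end
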